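/- (Doubling construction.) Let n and g be positive integers with n·g even and n > g. If there exists an OF(n,g), then there exists an OF(2n,g). -/

import Mathlib

/-- The weight of a word of length `m` over `ℤ_q` (represented as `Fin q`):
the number of nonzero coordinates. -/
def wordWeight {m q : ℕ} (x : Fin m → Fin q) : ℕ :=
  (Finset.univ.filter (fun i => (x i : ℕ) ≠ 0)).card

/-- The set `H(m)` of all words of length `m` and weight `2` over `ℤ_{g+1}`. -/
def weightTwoWords (m g : ℕ) : Finset (Fin m → Fin (g + 1)) :=
  Finset.univ.filter (fun x => wordWeight x = 2)

/-- A partition of `H(m)` (words of length `m`, weight `2` over `ℤ_{g+1}`) into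
`k` subsets, each of cardinality `s`, with pairwise Hamming distance at least
`3` inside each subset. -/
def HasDist3Partition (m g k s : ℕ) : Prop :=
  ∃ P : Fin k → Finset (Fin m → Fin (g + 1)),
    (∀ i j, i ≠ j → Disjoint (P i) (P j)) ∧
    (Finset.univ.biUnion P = weightTwoWords m g) ∧
    (∀ i, (P i).card = s) ∧
    (∀ i, ∀ x ∈ P i, ∀ y ∈ P i, x ≠ y → 3 ≤ hammingDist x y)

/-- An `ODAR(m,g)`: a partition of `H(m)` into `g²` subsets, each of
cardinality `C(m,2)` and with pairwise Hamming distance at least 3. -/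
def IsODAR (m g : ℕ) : Prop :=
  HasDist3Partition m g (g ^ 2) (m.choose 2)

/-- An `OF(m,g)`: a partition of `H(m)` into `g(m-1)` subsets, each of
cardinality `g·m/2` and with pairwise Hamming distance at least 3. -/
def IsOF (m g : ℕ) : Prop :=
  HasDist3Partition m g (g * (m - 1)) (g * m / 2)

/-!
Split the `2n` coordinates into two halves of length `n`. A word of weight two either lives in
one half or has exactly one nonzero entry in each half. Every class of the given `OF(n,g)` is
placed on both halves at once (a word of the left half and one of the right half are at
distance four), which gives `g(n-1)` classes of size `gn`. The words meeting both halves are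
split into `ng` classes indexed by `(c, w) ∈ ℤ_n × ℤ_g`: the word with entry `v+1` at position
`a` and `v+w+1` at position `n+b` lies in class `(c, w)` when `b = a + c + v`, where `v ∈ ℤ_g`
is read in `ℤ_n` through an injection (this is where `g ≤ n` enters). In one class, a word is
determined both by its left entry and by its right entry, and two words with the same left
position have different right positions; hence distinct words of a class are at distance at
least three.
-/

open Finset Function

lemma pi_single_eq_pi_single_iff {ι β : Type*} [DecidableEq ι] [Zero β] {a a' : ι} {s s' : β}
    (hs : s ≠ 0) :
    (Pi.single a s : ι → β) = Pi.single a' s' ↔ a = a' ∧ s = s' := by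
  refine ⟨fun h => ?_, fun ⟨ha, hs⟩ => ha ▸ hs ▸ rfl⟩
  have ha : a = a' := by
    by_contra ha
    exact hs (by simpa [ha] using congrFun h a)
  subst ha
  exact ⟨rfl, Pi.single_injective a h⟩

section Hamming

variable {ι β : Type*} [Fintype ι] [DecidableEq ι] [DecidableEq β] [Zero β]

lemma hammingNorm_pi_single {a : ι} {s : β} (hs : s ≠ 0) :
    hammingNorm (Pi.single a s : ι → β) = 1 :=
  card_eq_one.mpr ⟨a, by ext i; by_cases i = a <;> simp_all⟩

lemma hammingDist_pi_single_of_ne {a a' : ι} {s s' : β} (ha : a ≠ a') (hs : s ≠ 0)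
    (hs' : s' ≠ 0) : hammingDist (Pi.single a s : ι → β) (Pi.single a' s') = 2 :=
  card_eq_two.mpr ⟨a, a', ha, by ext i; by_cases i = a <;> by_cases i = a' <;> simp_all [eq_comm]⟩

lemma exists_eq_pi_single_of_hammingNorm_eq_one {x : ι → β} (hx : hammingNorm x = 1) :
    ∃ a, x a ≠ 0 ∧ x = Pi.single a (x a) := by
  obtain ⟨a, ha⟩ := card_eq_one.mp hx
  have hsupp : ∀ i, x i ≠ 0 ↔ i = a := fun i => by simpa using congrArg (i ∈ ·) ha
  refine ⟨a, (hsupp a).2 rfl, funext fun i => ?_⟩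
  by_cases hi : i = a
  · simp [hi]
  · simpa [hi] using mt (hsupp i).1 hi

end Hamming

section Append

variable {m n : ℕ} {α : Type*}

lemma Fin.append_inj {x x' : Fin m → α} {y y' : Fin n → α} :
    Fin.append x y = Fin.append x' y' ↔ x = x' ∧ y = y' := by
  refine ⟨fun h => ⟨funext fun i => ?_, funext fun i => ?_⟩, fun ⟨hx, hy⟩ => hx ▸ hy ▸ rfl⟩
  · simpa using congrFun h (Fin.castAdd n i)
  · simpa using congrFun h (Fin.natAdd m i)

lemma hammingDist_append [DecidableEq α] (x x' : Fin m → α) (y y' : Fin n → α) :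
    hammingDist (Fin.append x y) (Fin.append x' y') = hammingDist x x' + hammingDist y y' := by
  simp only [hammingDist, card_filter, Fin.sum_univ_add, Fin.append_left, Fin.append_right]

lemma hammingNorm_append [DecidableEq α] [Zero α] (x : Fin m → α) (y : Fin n → α) :
    hammingNorm (Fin.append x y) = hammingNorm x + hammingNorm y := by
  simp only [hammingNorm, card_filter, Fin.sum_univ_add, Fin.append_left, Fin.append_right]

end Append

lemma eq_append_cases_of_hammingNorm_eq_two {m n : ℕ} {α : Type*} [DecidableEq α] [Zero α]
    {z : Fin (m + n) → α} (hz : hammingNorm z = 2) :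
    (∃ x, hammingNorm x = 2 ∧ z = Fin.append x 0) ∨ (∃ y, hammingNorm y = 2 ∧ z = Fin.append 0 y) ∨
      ∃ a b s t, s ≠ 0 ∧ t ≠ 0 ∧ z = Fin.append (Pi.single a s) (Pi.single b t) := by
  rw [← Fin.append_castAdd_natAdd (f := z)] at hz ⊢
  set x : Fin m → α := fun i => z (Fin.castAdd n i)
  set y : Fin n → α := fun i => z (Fin.natAdd m i)
  rw [hammingNorm_append] at hz
  obtain hy | hx | ⟨hx, hy⟩ : hammingNorm y = 0 ∨ hammingNorm x = 0 ∨
      hammingNorm x = 1 ∧ hammingNorm y = 1 := by omega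
  · rw [hammingNorm_eq_zero] at hy
    exact Or.inl ⟨x, by simpa [hy] using hz, by rw [hy]⟩
  · rw [hammingNorm_eq_zero] at hx
    exact Or.inr (Or.inl ⟨y, by simpa [hx] using hz, by rw [hx]⟩)
  · obtain ⟨a, hxa, hxeq⟩ := exists_eq_pi_single_of_hammingNorm_eq_one hx
    obtain ⟨b, hyb, hyeq⟩ := exists_eq_pi_single_of_hammingNorm_eq_one hy
    exact Or.inr (Or.inr ⟨a, b, x a, y b, hxa, hyb, by rw [← hxeq, ← hyeq]⟩)

lemma wordWeight_eq_hammingNorm {m g : ℕ} (x : Fin m → Fin (g + 1)) :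
    wordWeight x = hammingNorm x := by
  simp only [wordWeight, hammingNorm, ne_eq, Fin.val_eq_zero_iff]

lemma mem_weightTwoWords {m g : ℕ} {x : Fin m → Fin (g + 1)} :
    x ∈ weightTwoWords m g ↔ hammingNorm x = 2 := by
  simp [weightTwoWords, wordWeight_eq_hammingNorm]

section Doubling

variable {n g : ℕ}

section BothHalves

variable {α : Type*} [Zero α] [DecidableEq α]

def bothHalves (S : Finset (Fin n → α)) : Finset (Fin (n + n) → α) :=
  S.image (Fin.append · 0) ∪ S.image (Fin.append 0)

lemma mem_bothHalves {S : Finset (Fin n → α)} {z : Fin (n + n) → α} :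
    z ∈ bothHalves S ↔ ∃ x ∈ S, z = Fin.append x 0 ∨ z = Fin.append 0 x := by
  simp only [bothHalves, mem_union, mem_image]
  grind

lemma disjoint_bothHalves {S T : Finset (Fin n → α)} (h : Disjoint S T) :
    Disjoint (bothHalves S) (bothHalves T) := by
  simp only [disjoint_left, mem_bothHalves] at h ⊢
  rintro z ⟨x, hx, rfl | rfl⟩ ⟨y, hy, hxy | hxy⟩ <;>
    obtain ⟨h₁, h₂⟩ := Fin.append_inj.mp hxy <;> simp_all

lemma card_bothHalves {S : Finset (Fin n → α)} (h0 : 0 ∉ S) :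
    #(bothHalves S) = 2 * #S := by
  rw [bothHalves, card_union_of_disjoint, card_image_of_injective, card_image_of_injective,
    two_mul]
  · exact fun y y' h => (Fin.append_inj.mp h).2
  · exact fun x x' h => (Fin.append_inj.mp h).1
  · simp only [disjoint_left, mem_image]
    rintro _ ⟨x, hx, rfl⟩ ⟨y, -, hxy⟩
    exact h0 ((Fin.append_inj.mp hxy).1 ▸ hx)

lemma three_le_hammingDist_of_mem_bothHalves {S : Finset (Fin n → α)}
    (hS : ∀ x ∈ S, hammingNorm x = 2)
    (hdist : ∀ x ∈ S, ∀ y ∈ S, x ≠ y → 3 ≤ hammingDist x y)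
    {z z' : Fin (n + n) → α} (hz : z ∈ bothHalves S) (hz' : z' ∈ bothHalves S) (hne : z ≠ z') :
    3 ≤ hammingDist z z' := by
  rw [mem_bothHalves] at hz hz'
  obtain ⟨x, hx, rfl | rfl⟩ := hz <;> obtain ⟨y, hy, rfl | rfl⟩ := hz' <;>
    simp only [hammingDist_append, hammingDist_self, hammingDist_zero_left,
      hammingDist_zero_right, hS x hx, hS y hy, add_zero, zero_add] at hne ⊢
  · exact hdist x hx y hy (by rintro rfl; exact hne rfl)
  · omega
  · omega
  · exact hdist x hx y hy (by rintro rfl; exact hne rfl)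

end BothHalves

section Cross

variable (e : Fin g ↪ Fin n)

def crossWord (c : Fin n) (w : Fin g) (p : Fin n × Fin g) : Fin (n + n) → Fin (g + 1) :=
  Fin.append (Pi.single p.1 p.2.succ) (Pi.single (p.1 + c + e p.2) (p.2 + w).succ)

def crossFactor (c : Fin n) (w : Fin g) : Finset (Fin (n + n) → Fin (g + 1)) :=
  univ.image (crossWord e c w)

lemma crossWord_eq_crossWord_iff {c c' : Fin n} {w w' : Fin g} {p p' : Fin n × Fin g} :
    crossWord e c w p = crossWord e c' w' p' ↔ p = p' ∧ c = c' ∧ w = w' := by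
  refine ⟨fun h => ?_, fun ⟨hp, hc, hw⟩ => hp ▸ hc ▸ hw ▸ rfl⟩
  obtain ⟨hleft, hright⟩ := Fin.append_inj.mp h
  obtain ⟨ha, hv⟩ := (pi_single_eq_pi_single_iff (Fin.succ_ne_zero _)).mp hleft
  obtain ⟨hb, hu⟩ := (pi_single_eq_pi_single_iff (Fin.succ_ne_zero _)).mp hright
  rw [Fin.succ_inj] at hv hu
  rw [ha, hv] at hb
  rw [hv] at hu
  exact ⟨Prod.ext ha hv, add_left_cancel (add_right_cancel hb), add_left_cancel hu⟩

lemma card_crossFactor (c : Fin n) (w : Fin g) : #(crossFactor e c w) = n * g := by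
  rw [crossFactor, card_image_of_injective, card_univ, Fintype.card_prod, Fintype.card_fin,
    Fintype.card_fin]
  exact fun p p' h => ((crossWord_eq_crossWord_iff e).mp h).1

lemma disjoint_crossFactor {c c' : Fin n} {w w' : Fin g} (h : (c, w) ≠ (c', w')) :
    Disjoint (crossFactor e c w) (crossFactor e c' w') := by
  simp only [crossFactor, disjoint_left, mem_image, mem_univ, true_and]
  rintro _ ⟨p, rfl⟩ ⟨p', hp'⟩
  obtain ⟨-, rfl, rfl⟩ := (crossWord_eq_crossWord_iff e).mp hp'
  exact h rfl

lemma hammingNorm_crossWord (c : Fin n) (w : Fin g) (p : Fin n × Fin g) :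
    hammingNorm (crossWord e c w p) = 2 := by
  rw [crossWord, hammingNorm_append, hammingNorm_pi_single (Fin.succ_ne_zero _),
    hammingNorm_pi_single (Fin.succ_ne_zero _)]

lemma three_le_hammingDist_crossWord (c : Fin n) (w : Fin g) {p p' : Fin n × Fin g}
    (h : p ≠ p') : 3 ≤ hammingDist (crossWord e c w p) (crossWord e c w p') := by
  obtain ⟨a, v⟩ := p
  obtain ⟨a', v'⟩ := p'
  simp only [crossWord, hammingDist_append]
  by_cases ha : a = a'
  · subst ha
    have hv : v ≠ v' := fun hv => h (hv ▸ rfl)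
    have hb : a + c + e v ≠ a + c + e v' := fun hb => hv (e.injective (add_left_cancel hb))
    have hleft : 0 < hammingDist (Pi.single a v.succ : Fin n → Fin (g + 1)) (Pi.single a v'.succ) :=
      hammingDist_pos.mpr fun h' => hv (Fin.succ_injective _ (Pi.single_injective a h'))
    rw [hammingDist_pi_single_of_ne hb (Fin.succ_ne_zero _) (Fin.succ_ne_zero _)]
    omega
  · have hright : 0 < hammingDist (Pi.single (a + c + e v) (v + w).succ : Fin n → Fin (g + 1))
        (Pi.single (a' + c + e v') (v' + w).succ) := by
      refine hammingDist_pos.mpr fun h' => ha ?_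
      obtain ⟨hb, hu⟩ := (pi_single_eq_pi_single_iff (Fin.succ_ne_zero _)).mp h'
      rw [Fin.succ_inj, add_left_inj] at hu
      rw [hu, add_left_inj, add_left_inj] at hb
      exact hb
    rw [hammingDist_pi_single_of_ne ha (Fin.succ_ne_zero _) (Fin.succ_ne_zero _)]
    omega

lemma exists_mem_crossFactor [NeZero n] [NeZero g] (a b : Fin n) (v u : Fin g) :
    ∃ c w, Fin.append (Pi.single a v.succ) (Pi.single b u.succ) ∈ crossFactor e c w :=
  ⟨b - a - e v, u - v, mem_image.mpr ⟨(a, v), mem_univ _, by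
    simp only [crossWord, add_sub_cancel, show a + (b - a - e v) + e v = b by abel]⟩⟩

lemma disjoint_bothHalves_crossFactor (S : Finset (Fin n → Fin (g + 1))) (c : Fin n) (w : Fin g) :
    Disjoint (bothHalves S) (crossFactor e c w) := by
  simp only [disjoint_left, mem_bothHalves, crossFactor, mem_image, mem_univ, true_and]
  rintro _ ⟨x, -, rfl | rfl⟩ ⟨p, hp⟩ <;>
    simp [crossWord, Fin.append_inj, Pi.single_eq_zero_iff] at hp

end Cross

lemma HasDist3Partition.of_card_eq {m g k s : ℕ} {ι : Type*} [Fintype ι]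
    (hι : Fintype.card ι = k) (P : ι → Finset (Fin m → Fin (g + 1)))
    (hdisj : Pairwise (Disjoint on P)) (hcover : univ.biUnion P = weightTwoWords m g)
    (hcard : ∀ i, #(P i) = s) (hdist : ∀ i, ∀ x ∈ P i, ∀ y ∈ P i, x ≠ y → 3 ≤ hammingDist x y) :
    HasDist3Partition m g k s := by
  set e := (Fintype.equivFinOfCardEq hι).symm
  refine ⟨P ∘ e, fun i j hij => hdisj (e.injective.ne hij), ?_, fun i => hcard (e i),
    fun i => hdist (e i)⟩
  rw [← hcover]
  ext z
  simp only [mem_biUnion, mem_univ, true_and, comp_apply, e.surjective.exists]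

lemma hammingNorm_eq_two_iff_exists_mem {m g k : ℕ} {Q : Fin k → Finset (Fin m → Fin (g + 1))}
    (hcover : univ.biUnion Q = weightTwoWords m g) {x : Fin m → Fin (g + 1)} :
    hammingNorm x = 2 ↔ ∃ i, x ∈ Q i := by
  simp [← mem_weightTwoWords, ← hcover]

lemma biUnion_bothHalves_crossFactor [NeZero n] [NeZero g] {k : ℕ}
    {Q : Fin k → Finset (Fin n → Fin (g + 1))} (hcover : univ.biUnion Q = weightTwoWords n g)
    (e : Fin g ↪ Fin n) :
    univ.biUnion (Sum.elim (bothHalves ∘ Q) (uncurry (crossFactor e))) =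
      weightTwoWords (n + n) g := by
  ext z
  simp only [mem_biUnion, mem_univ, true_and, Sum.exists, Sum.elim_inl, Sum.elim_inr,
    comp_apply, Prod.exists, uncurry_apply_pair, mem_weightTwoWords]
  constructor
  · rintro (⟨i, hz⟩ | ⟨c, w, hz⟩)
    · obtain ⟨x, hx, rfl | rfl⟩ := mem_bothHalves.mp hz <;>
        simp [hammingNorm_append, (hammingNorm_eq_two_iff_exists_mem hcover).mpr ⟨i, hx⟩]
    · obtain ⟨p, -, rfl⟩ := mem_image.mp hz
      exact hammingNorm_crossWord e c w p
  · intro hz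
    rcases eq_append_cases_of_hammingNorm_eq_two hz with
      ⟨x, hx, rfl⟩ | ⟨x, hx, rfl⟩ | ⟨a, b, s, t, hs, ht, rfl⟩
    · obtain ⟨i, hi⟩ := (hammingNorm_eq_two_iff_exists_mem hcover).mp hx
      exact Or.inl ⟨i, mem_bothHalves.mpr ⟨x, hi, Or.inl rfl⟩⟩
    · obtain ⟨i, hi⟩ := (hammingNorm_eq_two_iff_exists_mem hcover).mp hx
      exact Or.inl ⟨i, mem_bothHalves.mpr ⟨x, hi, Or.inr rfl⟩⟩
    · obtain ⟨v, rfl⟩ := Fin.exists_succ_eq.mpr hs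
      obtain ⟨u, rfl⟩ := Fin.exists_succ_eq.mpr ht
      exact Or.inr (exists_mem_crossFactor e a b v u)

theorem HasDist3Partition.double [NeZero n] [NeZero g] {k s : ℕ} (h : HasDist3Partition n g k s)
    (e : Fin g ↪ Fin n) (hs : 2 * s = n * g) :
    HasDist3Partition (n + n) g (k + n * g) (n * g) := by
  obtain ⟨Q, hdisj, hcover, hcard, hdist⟩ := h
  have hQ : ∀ i, ∀ x ∈ Q i, hammingNorm x = 2 := fun i x hx =>
    (hammingNorm_eq_two_iff_exists_mem hcover).mpr ⟨i, hx⟩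
  refine HasDist3Partition.of_card_eq (ι := Fin k ⊕ Fin n × Fin g) (by simp)
    (Sum.elim (bothHalves ∘ Q) (uncurry (crossFactor e))) ?_ ?_ ?_ ?_
  · rintro (i | ⟨c, w⟩) (j | ⟨c', w'⟩) hij
    · exact disjoint_bothHalves (hdisj i j fun h => hij (h ▸ rfl))
    · exact disjoint_bothHalves_crossFactor e _ _ _
    · exact (disjoint_bothHalves_crossFactor e _ _ _).symm
    · exact disjoint_crossFactor e fun h => hij (h ▸ rfl)
  · exact biUnion_bothHalves_crossFactor hcover e
  · rintro (i | ⟨c, w⟩)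
    · rw [Sum.elim_inl, comp_apply, card_bothHalves, hcard, hs]
      exact fun h0 => by simpa using hQ i 0 h0
    · exact card_crossFactor e c w
  · rintro (i | ⟨c, w⟩) z hz z' hz' hne
    · exact three_le_hammingDist_of_mem_bothHalves (hQ i) (hdist i) hz hz' hne
    · simp only [Sum.elim_inr, uncurry_apply_pair, crossFactor, mem_image, mem_univ, true_and]
        at hz hz'
      obtain ⟨p, rfl⟩ := hz
      obtain ⟨p', rfl⟩ := hz'
      exact three_le_hammingDist_crossWord e c w fun h => hne (h ▸ rfl)

end Doubling

theorem OF_doubling_general (n g : ℕ) (hg : 1 ≤ g) (heven : Even (n * g))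
    (hng : g < n) (h : IsOF n g) : IsOF (2 * n) g := by
  have : NeZero g := ⟨by omega⟩
  have : NeZero n := ⟨by omega⟩
  have hs : 2 * (g * n / 2) = n * g := by
    rw [mul_comm g]; exact Nat.two_mul_div_two_of_even heven
  have hdouble := h.double (Fin.castLEEmb hng.le) hs
  rw [IsOF, two_mul]
  convert hdouble using 2
  · have : g ≤ g * n := Nat.le_mul_of_pos_right g (by omega)
    rw [Nat.mul_sub_one, Nat.mul_sub_one, mul_add, mul_comm n g]; omega
  · rw [← two_mul, mul_left_comm, Nat.mul_div_cancel_left _ two_pos, mul_comm]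

/-- Doubling construction: if `n·g` is even, `n > g ≥ 1` and an `OF(n,g)`
exists, then an `OF(2n,g)` exists. -/
theorem OF_doubling (n g : ℕ) (hg : 1 ≤ g) (hn : 1 ≤ n) (heven : Even (n * g))
    (hng : g < n) (h : IsOF n g) : IsOF (2 * n) g :=
  OF_doubling_general n g hg heven hng h
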